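/- arXiv:math/0211433 — 2 statements merged into one kernel-verified Lean document; each statement's English description precedes it below -/
import Mathlib

section
/- Let κ be a singular cardinal with cf(κ) = δ ≥ ℵ₁. Let (κ_i | i < δ) be a strictly increasing and continuous sequence of cardinals cofinal in κ with 2^δ ≤ κ₀ < κ. Let δ ≤ λ < κ, let θ > κ be regular, let Φ be a function from [H_θ]^λ to the nonstationary ideal on δ, and let S ⊆ [H_θ]^λ be stationary in [H_θ]^λ. Then there is a club C ⊆ δ such that for every function f ∈ ∏_{i ∈ C} κ_i⁺ there is some Y ≺ H_θ with Y ∈ S, C ∩ Φ(Y) = ∅, and f(κ_i⁺) < sup(Y ∩ κ_i⁺) for all i ∈ C. -/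
open Cardinal Set

noncomputable section

/-- `C` is a club (closed unbounded) subset of the ordinal `δ`. -/
def IsClubIn (C : Set Ordinal.{0}) (δ : Ordinal.{0}) : Prop :=
  C ⊆ Set.Iio δ ∧ (∀ a < δ, ∃ b ∈ C, a ≤ b) ∧
    ∀ a < δ, (∃ b ∈ C, b < a) → (∀ b < a, ∃ c ∈ C, b < c ∧ c < a) → a ∈ C

/-- `S` is a stationary subset of the ordinal `δ`. -/
def IsStatIn (S : Set Ordinal.{0}) (δ : Ordinal.{0}) : Prop :=
  ∀ C, IsClubIn C δ → (S ∩ C).Nonempty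

/-- The product `∏ A` of a set of cardinals: choice functions picking an
ordinal below each member of `A`. -/
def ProdSet (A : Set Cardinal.{0}) : Type 1 :=
  { f : ↥A → Ordinal.{0} // ∀ a : ↥A, f a < (a : Cardinal).ord }

/-- The least cardinality of a family that dominates every element with
respect to the relation `r` (the cofinality of the relation `r`). -/
def relCof {α : Type 1} (r : α → α → Prop) : Cardinal.{1} :=
  sInf { c : Cardinal.{1} | ∃ F : Set α, #(↥F) = c ∧ ∀ x, ∃ y ∈ F, r x y }

/-- Domination modulo an ultrafilter `D` on `A`, for elements of `∏ A`. -/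
def ltD {A : Set Cardinal.{0}} (D : Ultrafilter ↥A) (f g : ProdSet A) : Prop :=
  { a : ↥A | f.1 a < g.1 a } ∈ D

/-- `pcf A`: the set of possible cofinalities of ultraproducts `∏ A / D`. -/
def pcf (A : Set Cardinal.{0}) : Set Cardinal.{0} :=
  { c | ∃ D : Ultrafilter ↥A, Cardinal.lift.{1} c = relCof (ltD D) }

/-- `c` is the maximum of `pcf A`. -/
def IsMaxPcf (A : Set Cardinal.{0}) (c : Cardinal.{0}) : Prop :=
  c ∈ pcf A ∧ ∀ d ∈ pcf A, d ≤ c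

/-- Shelah's pseudopower `pp μ` of a (singular) cardinal `μ`. -/
def pp (μ : Cardinal.{0}) : Cardinal.{0} :=
  sSup { c : Cardinal.{0} | ∃ A : Set Cardinal.{0}, (∀ a ∈ A, a.IsRegular ∧ a < μ) ∧
      #(↥A) = Cardinal.lift.{1} μ.ord.cof ∧ (∀ b < μ, ∃ a ∈ A, b ≤ a) ∧
      ∃ D : Ultrafilter ↥A, (∀ b < μ, { a : ↥A | b < (a : Cardinal) } ∈ D) ∧
        Cardinal.lift.{1} c = relCof (ltD D) }

/-- A sequence of generators is smooth. -/
def IsSmooth (A : Set Cardinal.{0}) (b : Cardinal.{0} → Set Cardinal.{0}) : Prop :=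
  ∀ θ ∈ A, ∀ θ' ∈ b θ, b θ' ⊆ b θ

/-- A sequence of generators is closed: `b θ = A ∩ pcf (b θ)`. -/
def IsClosedGen (A : Set Cardinal.{0}) (b : Cardinal.{0} → Set Cardinal.{0}) : Prop :=
  ∀ θ ∈ A, b θ = A ∩ pcf (b θ)

/-- A sequence of generators: `J_{≤θ}(A) = J_{<θ}(A) + b θ` for all `θ ∈ A`. -/
def IsGenerating (A : Set Cardinal.{0}) (b : Cardinal.{0} → Set Cardinal.{0}) : Prop :=
  ∀ θ ∈ A, b θ ⊆ A ∧
    ∀ x ⊆ A, (∀ c ∈ pcf x, c ≤ θ) ↔ ∃ y ⊆ A, (∀ c ∈ pcf y, c < θ) ∧ x ⊆ y ∪ b θ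

/-- `κseq` is a strictly increasing continuous sequence of length `δ.ord`,
cofinal in `κ`, consisting of cardinals `< κ`. -/
def IsNiceSeq (δ : Cardinal.{0}) (κseq : Ordinal.{0} → Cardinal.{0}) (κ : Cardinal.{0}) : Prop :=
  (∀ i j, i < j → j < δ.ord → κseq i < κseq j) ∧
  (∀ i, i < δ.ord → Order.IsSuccLimit i → κseq i = ⨆ j : ↥(Set.Iio i), κseq j.1) ∧
  (∀ i, i < δ.ord → κseq i < κ) ∧
  (∀ c < κ, ∃ i, i < δ.ord ∧ c ≤ κseq i)

/-- `S ⊆ [H]^λ` is stationary: every structure on `H` with at most `λ` many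
functions has an "elementary substructure" (a closed subset) whose universe is in `S`. -/
def StatInPow (H : Set Ordinal.{0}) (lam : Cardinal.{0}) (S : Set (Set Ordinal.{0})) : Prop :=
  ∀ (ι : Type) (F : ι → List Ordinal → Ordinal), #ι ≤ lam →
    (∀ i l, (∀ x ∈ l, x ∈ H) → F i l ∈ H) →
    ∃ Y ∈ S, Y ⊆ H ∧ #(↥Y) = Cardinal.lift.{1} lam ∧
      ∀ i l, (∀ x ∈ l, x ∈ Y) → F i l ∈ Y

/-! Otherwise every club `C ⊆ δ` has a counterexample `f_C`. There are at most `2 ^ δ ≤ κ₀`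
clubs, so `g i = sup_C (f_C i + 1)` stays below the regular cardinal `κ_i⁺`. Stationarity of `S`
gives `Y ∈ S` containing every `g i`, and for a club `C` disjoint from `Φ Y` this yields
`f_C i < g i ≤ sup (Y ∩ κ_i⁺)` on `C`, contradicting the choice of `f_C`. -/

theorem Cardinal.IsRegular.exists_lt_ord_forall_lt {c : Cardinal.{u}} (hc : c.IsRegular)
    {ι : Type v} (hι : Cardinal.lift.{u} #ι < Cardinal.lift.{v} c) (p : ι → Prop)
    (f : ι → Ordinal.{u}) (hf : ∀ s, p s → f s < c.ord) :
    ∃ o < c.ord, ∀ s, p s → f s < o := by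
  have hsucc : ∀ s : {s // p s}, Order.succ (f s) < c.ord := fun s =>
    (Cardinal.isSuccLimit_ord hc.aleph0_le).succ_lt (hf s s.2)
  have hsmall : Cardinal.lift.{u} #{s // p s} < (Ordinal.lift.{v} c.ord).cof := by
    rw [← Ordinal.lift_cof, hc.cof_ord]
    exact (Cardinal.lift_le.2 (Cardinal.mk_subtype_le p)).trans_lt hι
  refine ⟨⨆ s : {s // p s}, Order.succ (f s), Ordinal.lift_iSup_lt_of_lt_cof hsmall hsucc, ?_⟩
  intro s hs
  exact (Order.lt_succ (f s)).trans_le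
    (le_ciSup (f := fun s : {s // p s} => Order.succ (f s))
      ⟨c.ord, by rintro _ ⟨t, rfl⟩; exact (hsucc t).le⟩ ⟨s, hs⟩)

theorem mk_isClubIn_le (o : Ordinal.{0}) :
    #{C // IsClubIn C o} ≤ Cardinal.lift.{1} (2 ^ o.card) := by
  have hinj :
      Function.Injective fun C : {C // IsClubIn C o} => ((↑) : Iio o → Ordinal) ⁻¹' C.1 := by
    intro C D h
    have hCD := Subtype.preimage_coe_eq_preimage_coe_iff.1 h
    rw [inter_eq_right.2 C.2.1, inter_eq_right.2 D.2.1] at hCD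
    exact Subtype.ext hCD
  calc #{C // IsClubIn C o} ≤ #(Set (Iio o)) := Cardinal.mk_le_of_injective hinj
    _ = Cardinal.lift.{1} (2 ^ o.card) := by
      rw [Cardinal.mk_set, Cardinal.mk_Iio_ordinal, Cardinal.lift_two_power]

theorem exists_isClubIn_inter_eq_empty {T : Set Ordinal.{0}} {o : Ordinal.{0}}
    (hT : ¬ IsStatIn T o) : ∃ C, IsClubIn C o ∧ C ∩ T = ∅ := by
  simp only [IsStatIn, not_forall, Set.not_nonempty_iff_eq_empty] at hT
  obtain ⟨C, hC, hCT⟩ := hT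
  exact ⟨C, hC, Set.inter_comm C T ▸ hCT⟩

theorem IsNiceSeq.le_of_le {δ κ : Cardinal.{0}} {κseq : Ordinal.{0} → Cardinal.{0}}
    (h : IsNiceSeq δ κseq κ) {i j : Ordinal.{0}} (hij : i ≤ j) (hj : j < δ.ord) :
    κseq i ≤ κseq j := by
  rcases hij.eq_or_lt with rfl | hij
  · exact le_rfl
  · exact (h.1 i j hij hj).le

theorem StatInPow.exists_mem_forall_mem {H : Set Ordinal.{0}} {lam : Cardinal.{0}}
    {S : Set (Set Ordinal.{0})} (hS : StatInPow H lam S) {o : Ordinal.{0}} (ho : o.card ≤ lam)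
    (g : Ordinal.{0} → Ordinal.{0}) (hg : ∀ i < o, g i ∈ H) :
    ∃ Y ∈ S, ∀ i < o, g i ∈ Y := by
  let c : o.ToType → Ordinal := fun t => g (Ordinal.ToType.mk.symm t).1
  obtain ⟨Y, hYS, -, -, hY⟩ := hS o.ToType (fun t _ => c t) (by rwa [Cardinal.mk_toType])
    (fun t _ _ => hg _ (Ordinal.ToType.mk.symm t).2)
  refine ⟨Y, hYS, fun i hi => ?_⟩
  simpa [c] using hY (Ordinal.ToType.mk ⟨i, hi⟩) [] (by simp)

theorem stmt0_general (κ δ lam θ : Cardinal.{0}) (κseq : Ordinal → Cardinal)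
    (hδ : Cardinal.aleph 1 ≤ δ)
    (hseq : IsNiceSeq δ κseq κ)
    (h0 : 2 ^ δ ≤ κseq 0)
    (hlam1 : δ ≤ lam)
    (hθ : κ < θ)
    (S : Set (Set Ordinal))
    (hS : StatInPow (Set.Iio θ.ord) lam S)
    (Φ : Set Ordinal → Set Ordinal)
    (hΦ : ∀ Y, Φ Y ⊆ Set.Iio δ.ord ∧ ¬ IsStatIn (Φ Y) δ.ord) :
    ∃ C, IsClubIn C δ.ord ∧ ∀ f : Ordinal → Ordinal,
      (∀ i ∈ C, f i < (Order.succ (κseq i)).ord) →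
      ∃ Y ∈ S, C ∩ Φ Y = ∅ ∧
        ∀ i ∈ C, f i < sSup (Y ∩ Set.Iio (Order.succ (κseq i)).ord) := by
  by_contra! hcon
  choose f hf_lt hf_bad using hcon
  have hpow_le : ∀ i < δ.ord, 2 ^ δ ≤ κseq i := fun i hi =>
    h0.trans (hseq.le_of_le zero_le hi)
  have hreg : ∀ i < δ.ord, (Order.succ (κseq i)).IsRegular := fun i hi =>
    isRegular_succ ((aleph0_le_aleph 1).trans (hδ.trans ((cantor δ).le.trans (hpow_le i hi))))
  have hclubs : ∀ i < δ.ord,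
      Cardinal.lift.{0} #{C // IsClubIn C δ.ord} < Cardinal.lift.{1} (Order.succ (κseq i)) :=
    fun i hi => by
      rw [lift_uzero]
      refine (mk_isClubIn_le δ.ord).trans_lt ?_
      rw [card_ord, lift_lt]
      exact (hpow_le i hi).trans_lt (Order.lt_succ _)
  choose! g hg_lt hg_dom using fun i (hi : i < δ.ord) =>
    (hreg i hi).exists_lt_ord_forall_lt (hclubs i hi) (fun C => i ∈ C.1) (fun C => f C.1 C.2 i)
      (fun C hiC => hf_lt C.1 C.2 i hiC)
  obtain ⟨Y, hYS, hgY⟩ := hS.exists_mem_forall_mem (by rwa [card_ord]) g fun i hi =>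
    (hg_lt i hi).trans (ord_lt_ord.2 ((Order.succ_le_of_lt (hseq.2.2.1 i hi)).trans_lt hθ))
  obtain ⟨C, hC, hCΦ⟩ := exists_isClubIn_inter_eq_empty (hΦ Y).2
  obtain ⟨i, hiC, hle⟩ := hf_bad C hC Y hYS hCΦ
  have hi : i < δ.ord := hC.1 hiC
  have hgi_le : g i ≤ sSup (Y ∩ Set.Iio (Order.succ (κseq i)).ord) :=
    le_csSup ⟨_, fun _ hx => hx.2.le⟩ ⟨hgY i hi, hg_lt i hi⟩
  exact (hg_dom i hi ⟨C, hC⟩ hiC).not_ge (hgi_le.trans hle)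

/-- Lemma 1.5 of the paper. -/
theorem stmt0 (κ δ lam θ : Cardinal.{0}) (κseq : Ordinal → Cardinal)
    (hδreg : δ.IsRegular) (hδ : Cardinal.aleph 1 ≤ δ)
    (hsing : δ < κ) (hcf : κ.ord.cof = δ)
    (hseq : IsNiceSeq δ κseq κ)
    (h0 : 2 ^ δ ≤ κseq 0)
    (hlam1 : δ ≤ lam) (hlam2 : lam < κ)
    (hθreg : θ.IsRegular) (hθ : κ < θ)
    (S : Set (Set Ordinal))
    (hSsub : ∀ Y ∈ S, Y ⊆ Set.Iio θ.ord ∧ #(↥Y) = Cardinal.lift.{1} lam)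
    (hS : StatInPow (Set.Iio θ.ord) lam S)
    (Φ : Set Ordinal → Set Ordinal)
    (hΦ : ∀ Y, Φ Y ⊆ Set.Iio δ.ord ∧ ¬ IsStatIn (Φ Y) δ.ord) :
    ∃ C, IsClubIn C δ.ord ∧ ∀ f : Ordinal → Ordinal,
      (∀ i ∈ C, f i < (Order.succ (κseq i)).ord) →
      ∃ Y ∈ S, C ∩ Φ Y = ∅ ∧
        ∀ i ∈ C, f i < sSup (Y ∩ Set.Iio (Order.succ (κseq i)).ord) :=
  stmt0_general κ δ lam θ κseq hδ hseq h0 hlam1 hθ S hS Φ hΦ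
end
end

section
/- Let κ be a singular strong limit cardinal of uncountable cofinality. If the set {α < κ | 2^α = α⁺} is co-stationary in κ, then the set {λ < κ | λ^{cf(λ)} > λ⁺ · 2^{cf(λ)}} is stationary in κ; i.e., SCH fails stationarily often below κ. -/
open Cardinal Set

noncomputable section

/-!
The points below `κ` that are accumulation points of a given club `C`, of the strong limit
cardinals above `cf κ`, and of a cofinal subset of `κ` of size `cf κ` form a club, because
`cf κ > ℵ₀`. Each of them is a strong limit cardinal `λ ∈ C` with `cf λ ≤ cf κ < λ`, so by
co-stationarity one of them has `2^λ > λ⁺`. For a strong limit `λ` we have `2^λ ≤ λ^{cf λ}`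
(write `λ` as a union of `cf λ` smaller sets), and `2^{cf λ} ≤ λ` as `λ` is singular; hence
`λ⁺ · 2^{cf λ} = λ⁺ < 2^λ ≤ λ^{cf λ}`.
-/

universe u

open Order Ordinal Filter

namespace Cardinal

lemma IsStrongLimit.two_power_le_power_cof {c : Cardinal.{u}} (hc : c.IsStrongLimit) :
    2 ^ c ≤ c ^ c.ord.cof := by
  induction c using Cardinal.inductionOn with | mk α
  obtain ⟨_, _, hα⟩ := exists_ord_eq_type_lt α
  have : NoMaxOrder α := by
    rw [← isSuccPrelimit_type_lt_iff, ← hα]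
    exact (isSuccLimit_ord hc.aleph0_le).isSuccPrelimit
  obtain ⟨s, hs, hs_card⟩ := exists_cof_eq α
  have hcover : #α ≤ sum fun i : s => #(Iio i.1) := by
    have hunion : (⋃ i : s, Iio i.1) = Set.univ := by
      rw [iUnion_coe_set, isCofinal_iff_iUnion_Iio_eq_univ.1 hs]
    rw [← mk_univ, ← hunion]
    exact mk_iUnion_le_sum_mk
  calc 2 ^ #α ≤ 2 ^ sum fun i : s => #(Iio i.1) := power_le_power_left two_ne_zero hcover
    _ = prod fun i : s => 2 ^ #(Iio i.1) := power_sum 2 _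
    _ ≤ prod fun _ : s => #α :=
        prod_le_prod _ _ fun i => (hc.isStrongPrelimit (mk_Iio_lt i.1 hα)).le
    _ = #α ^ (#α).ord.cof := by rw [prod_const', hs_card, hα, cof_type]

theorem IsStrongLimit.succ_mul_two_power_cof_lt {l : Cardinal.{u}} (hl : l.IsStrongLimit)
    (hsing : l.ord.cof < l) (hgch : 2 ^ l ≠ succ l) :
    succ l * 2 ^ l.ord.cof < l ^ l.ord.cof := by
  have hsucc : succ l * 2 ^ l.ord.cof = succ l :=
    mul_eq_left (hl.aleph0_le.trans (le_succ l))
      ((hl.isStrongPrelimit hsing).le.trans (le_succ l)) (power_ne_zero _ two_ne_zero)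
  rw [hsucc]
  exact (lt_of_le_of_ne (succ_le_of_lt (cantor l)) hgch.symm).trans_le hl.two_power_le_power_cof

theorem exists_isStrongLimit_between {κ c : Cardinal.{u}} (hκ : κ.IsStrongLimit)
    (hcof : ℵ₀ < κ.ord.cof) (hc : c < κ) : ∃ μ, μ.IsStrongLimit ∧ c < μ ∧ μ < κ := by
  set t : ℕ → Cardinal.{u} := fun n => (fun x => 2 ^ x)^[n] c
  have ht_succ : ∀ n, t (n + 1) = 2 ^ t n := fun n => Function.iterate_succ_apply' _ _ _
  have ht_lt : ∀ n, t n < ⨆ m, t m := fun n =>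
    (ht_succ n ▸ cantor (t n)).trans_le (le_ciSup Cardinal.bddAbove_of_small (n + 1))
  refine ⟨⨆ n, t n, ⟨(ht_lt 0).ne_bot, fun x hx => ?_⟩, ht_lt 0, ?_⟩
  · obtain ⟨n, hn⟩ := exists_lt_of_lt_ciSup hx
    exact (power_le_power_left two_ne_zero hn.le).trans_lt (ht_succ n ▸ ht_lt (n + 1))
  · refine lift_iSup_lt_of_lt_cof_ord (by simpa using hcof) fun n => ?_
    induction n with
    | zero => exact hc
    | succ n ih => exact ht_succ n ▸ hκ.isStrongPrelimit ih

end Cardinal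

theorem AccPt.exists_mem_lt {S : Set Ordinal} {o : Ordinal} (h : AccPt o (𝓟 S)) :
    ∃ c ∈ S, c < o := by
  obtain ⟨hmin, hdense⟩ := SuccOrder.accPt_principal.1 h
  obtain ⟨b, hb⟩ := not_isMin_iff.1 hmin
  obtain ⟨c, hcS, -, hco⟩ := hdense b hb
  exact ⟨c, hcS, hco⟩

lemma lift_cof_le_mk_of_accPt {S : Set Ordinal.{u}} {o : Ordinal.{u}} (h : AccPt o (𝓟 S)) :
    Cardinal.lift.{u + 1} o.cof ≤ #S := by
  rw [lift_cof, ← cof_Iio]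
  refine (cof_le (s := {x : Iio o | x.1 ∈ S}) fun x => ?_).trans ?_
  · obtain ⟨y, hyS, hxy, hyo⟩ := (SuccOrder.accPt_principal.1 h).2 x x.2
    exact ⟨⟨y, hyo⟩, hyS, hxy.le⟩
  · exact mk_le_of_injective (f := fun x => (⟨x.1.1, x.2⟩ : S))
      fun x y hxy => by ext; simpa using congrArg Subtype.val hxy

lemma exists_isStrongLimit_ord_eq_of_accPt {o : Ordinal.{u}}
    (h : AccPt o (𝓟 (ord '' {μ : Cardinal.{u} | μ.IsStrongLimit}))) :
    ∃ l : Cardinal.{u}, l.IsStrongLimit ∧ l.ord = o := by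
  obtain ⟨hmin, hdense⟩ := SuccOrder.accPt_principal.1 h
  have hbetween : ∀ b < o, ∃ μ : Cardinal, μ.IsStrongLimit ∧ b < μ.ord ∧ μ ≤ o.card := by
    intro b hb
    obtain ⟨_, ⟨μ, hμ, rfl⟩, hbμ, hμo⟩ := hdense b hb
    exact ⟨μ, hμ, hbμ, ord_le.1 hμo.le⟩
  have hord : o.card.ord = o := by
    refine (ord_card_le o).antisymm (not_lt.1 fun hlt => ?_)
    obtain ⟨μ, -, hlt', hμ⟩ := hbetween _ hlt
    exact hlt'.not_ge (ord_le_ord.2 hμ)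
  refine ⟨o.card, ⟨?_, fun x hx => ?_⟩, hord⟩
  · rw [Ne, card_eq_zero]
    rintro rfl
    exact hmin isMin_bot
  · obtain ⟨μ, hμ, hxμ, hμo⟩ := hbetween x.ord (hord ▸ ord_lt_ord.2 hx)
    exact (hμ.isStrongPrelimit (ord_lt_ord.1 hxμ)).trans_le hμo

theorem exists_mk_eq_lift_cof_forall_exists_between {o : Ordinal.{u}} (ho : IsSuccLimit o) :
    ∃ T : Set Ordinal.{u}, #T = Cardinal.lift.{u + 1} o.cof ∧ ∀ a < o, ∃ c ∈ T, a < c ∧ c < o := by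
  obtain ⟨s, hs, hs_card⟩ := exists_cof_eq (Iio o)
  refine ⟨Subtype.val '' s, ?_, fun a ha => ?_⟩
  · rw [mk_image_eq Subtype.val_injective, hs_card, cof_Iio, lift_cof]
  · obtain ⟨x, hx, hax⟩ := hs ⟨succ a, ho.succ_lt ha⟩
    exact ⟨x, ⟨x, hx, rfl⟩, (lt_succ a).trans_le hax, x.2⟩

theorem IsClubIn.exists_between {C : Set Ordinal} {δ a : Ordinal} (hC : IsClubIn C δ)
    (hδ : IsSuccLimit δ) (ha : a < δ) : ∃ c ∈ C, a < c ∧ c < δ := by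
  obtain ⟨c, hc, hac⟩ := hC.2.1 (succ a) (hδ.succ_lt ha)
  exact ⟨c, hc, (lt_succ a).trans_le hac, hC.1 hc⟩

theorem IsClubIn.mem_of_accPt {C : Set Ordinal} {δ o : Ordinal} (hC : IsClubIn C δ)
    (ho : o < δ) (h : AccPt o (𝓟 C)) : o ∈ C :=
  hC.2.2 o ho h.exists_mem_lt fun b hb => (SuccOrder.accPt_principal.1 h).2 b hb

theorem isClubIn_setOf_forall_accPt {ι : Type} [Countable ι] {δ : Ordinal} (hδ : ℵ₀ < δ.cof)
    (S : ι → Set Ordinal) (hS : ∀ k, ∀ a < δ, ∃ c ∈ S k, a < c ∧ c < δ) :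
    IsClubIn {o | o < δ ∧ ∀ k, AccPt o (𝓟 (S k))} δ := by
  refine ⟨fun o ho => ho.1, fun a ha => ?_, fun a ha ⟨_, _, hba⟩ hdense => ⟨ha, fun k => ?_⟩⟩
  · choose! g hgS hag hgδ using hS
    have hδlim : IsSuccLimit δ := one_lt_cof_iff.1 (one_lt_aleph0.trans hδ)
    have hFδ : ∀ k, ∀ x < δ, succ (g k x) < δ := fun k x hx => hδlim.succ_lt (hgδ k x hx)
    set F : ι → Ordinal → Ordinal := fun k x => succ (g k x)
    have ho : nfpFamily F a < δ :=
      nfpFamily_lt_ord hδ (mk_le_aleph0.trans_lt hδ) hFδ ha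
    refine ⟨nfpFamily F a, ⟨ho, fun k => SuccOrder.accPt_principal.2 ⟨?_, fun b hb => ?_⟩⟩,
      le_nfpFamily F a⟩
    · exact not_isMin_of_lt ((hag k a ha).trans_le
        ((le_succ _).trans (foldr_le_nfpFamily F a [k])))
    · obtain ⟨l, hbl⟩ := lt_nfpFamily_iff.1 hb
      have hl : List.foldr F a l < δ := (foldr_le_nfpFamily F a l).trans_lt ho
      exact ⟨g k _, hgS k _ hl, hbl.trans (hag k _ hl),
        (lt_succ _).trans_le (foldr_le_nfpFamily F a (k :: l))⟩
  · refine SuccOrder.accPt_principal.2 ⟨not_isMin_of_lt hba, fun c hc => ?_⟩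
    obtain ⟨w, hw, hcw, hwa⟩ := hdense c hc
    obtain ⟨d, hdS, hcd, hdw⟩ := (SuccOrder.accPt_principal.1 (hw.2 k)).2 c hcw
    exact ⟨d, hdS, hcd, hdw.trans hwa⟩

/-- if `{α < κ | 2^α = α⁺}` is co-stationary in the singular
strong limit `κ` of uncountable cofinality, then SCH fails stationarily often
below `κ`. -/
theorem stmt6 (κ : Cardinal.{0}) (hsl : κ.IsStrongLimit)
    (hucf : ℵ₀ < κ.ord.cof) (hsing : κ.ord.cof < κ)
    (hcostat :
      IsStatIn (Set.Iio κ.ord \ {o : Ordinal | 2 ^ o.card = Order.succ o.card}) κ.ord) :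
    IsStatIn {o : Ordinal | o < κ.ord ∧
      Order.succ o.card * 2 ^ o.card.ord.cof < o.card ^ o.card.ord.cof} κ.ord := by
  intro C hC
  have hκ : IsSuccLimit κ.ord := isSuccLimit_ord hsl.aleph0_le
  obtain ⟨T, hT_card, hT⟩ := exists_mk_eq_lift_cof_forall_exists_between hκ
  let S : Fin 3 → Set Ordinal := ![C, ord '' {μ | μ.IsStrongLimit ∧ κ.ord.cof < μ}, T]
  have hS : ∀ k, ∀ a < κ.ord, ∃ c ∈ S k, a < c ∧ c < κ.ord := by
    intro k a ha
    fin_cases k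
    · exact hC.exists_between hκ ha
    · obtain ⟨μ, hμ, haμ, hμκ⟩ :=
        exists_isStrongLimit_between hsl hucf (max_lt (lt_ord.1 ha) hsing)
      exact ⟨μ.ord, ⟨μ, ⟨hμ, (le_max_right _ _).trans_lt haμ⟩, rfl⟩,
        lt_ord.2 ((le_max_left _ _).trans_lt haμ), ord_lt_ord.2 hμκ⟩
    · exact hT a ha
  obtain ⟨o, ⟨-, hgch⟩, hoκ, hacc⟩ := hcostat _ (isClubIn_setOf_forall_accPt hucf S hS)
  obtain ⟨l, hl, rfl⟩ := exists_isStrongLimit_ord_eq_of_accPt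
    ((hacc 1).mono (monotone_principal (image_mono fun μ hμ => hμ.1)))
  have hcof_lt : κ.ord.cof < l := by
    obtain ⟨_, ⟨μ, hμ, rfl⟩, hμl⟩ := (hacc 1).exists_mem_lt
    exact hμ.2.trans (ord_lt_ord.1 hμl)
  have hcof_le : l.ord.cof ≤ κ.ord.cof :=
    Cardinal.lift_le.1 ((lift_cof_le_mk_of_accPt (hacc 2)).trans hT_card.le)
  have hgch' : 2 ^ l ≠ succ l := by simpa using hgch
  refine ⟨l.ord, ⟨hoκ, ?_⟩, hC.mem_of_accPt hoκ (hacc 0)⟩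
  simpa using hl.succ_mul_two_power_cof_lt (hcof_le.trans_lt hcof_lt) hgch'
end
end
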